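/- If there exist projective stationary many countable selfgeneric M ≺ H_θ, then the non-stationary ideal NS_{ω₁} is precipitous. -/

import Mathlib

noncomputable section

namespace CcPaper

/-! ### First-order logic over the membership relation -/

/-- First-order formulas in the language of set theory with `n` free variables. -/
inductive Fml : ℕ → Type
  | mem : ∀ {n}, Fin n → Fin n → Fml n
  | eq : ∀ {n}, Fin n → Fin n → Fml n
  | not : ∀ {n}, Fml n → Fml n
  | and : ∀ {n}, Fml n → Fml n → Fml n
  | ex : ∀ {n}, Fml (n + 1) → Fml n

/-- Satisfaction of a formula in a class `D` of ZF-sets, quantifiers relativized to `D`. -/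
def Sat (D : Set ZFSet.{0}) : ∀ {n}, Fml n → (Fin n → ZFSet.{0}) → Prop
  | _, .mem i j, v => v i ∈ v j
  | _, .eq i j, v => v i = v j
  | _, .not φ, v => ¬ Sat D φ v
  | _, .and φ ψ, v => Sat D φ v ∧ Sat D ψ v
  | _, .ex φ, v => ∃ x ∈ D, Sat D φ (Fin.snoc v x)

/-- `M` is an elementary substructure of the class `H` (w.r.t. `∈`). -/
def ElemSub (M H : Set ZFSet.{0}) : Prop :=
  M ⊆ H ∧ ∀ {n : ℕ} (φ : Fml n) (v : Fin n → ZFSet.{0}), (∀ i, v i ∈ M) →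
    (Sat M φ v ↔ Sat H φ v)

/-- A transitive class. -/
def TransClass (H : Set ZFSet.{0}) : Prop := ∀ x ∈ H, ∀ y ∈ x, y ∈ H

/-! ### Ordinals, ω₁, functions, hulls -/

/-- `x` is a (von Neumann) ordinal. -/
def IsOrd (x : ZFSet.{0}) : Prop := x.IsTransitive ∧ ∀ y ∈ x, ZFSet.IsTransitive y

/-- `o` is the first uncountable ordinal. -/
def IsOmega1 (o : ZFSet.{0}) : Prop :=
  IsOrd o ∧ ¬ o.toSet.Countable ∧ ∀ β ∈ o.toSet, β.toSet.Countable

/-- `f` is a (set-)function, i.e. a single-valued set of Kuratowski pairs. -/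
def IsFun (f : ZFSet.{0}) : Prop :=
  (∀ z ∈ f, ∃ a b, z = ZFSet.pair a b) ∧
    ∀ a b b', ZFSet.pair a b ∈ f → ZFSet.pair a b' ∈ f → b = b'

/-- `x` belongs to the domain of `f`. -/
def domMem (f x : ZFSet.{0}) : Prop := ∃ y, ZFSet.pair x y ∈ f

/-- `f` is a function with domain `d`. -/
def FunOn (f d : ZFSet.{0}) : Prop := IsFun f ∧ ∀ x, domMem f x ↔ x ∈ d

/-- `Hull M x = { f(x) : f ∈ M, x ∈ dom f }`. -/
def Hull (M : Set ZFSet.{0}) (x : ZFSet.{0}) : Set ZFSet.{0} :=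
  {y | ∃ f ∈ M, IsFun f ∧ ZFSet.pair x y ∈ f}

/-- `x ∥_{ω₁} M` : `Hull M x` and `M` contain the same elements of `ω₁`. -/
def ParallelO (ω1 x : ZFSet.{0}) (M : Set ZFSet.{0}) : Prop :=
  ∀ z ∈ ω1.toSet, (z ∈ Hull M x ↔ z ∈ M)

/-- `δ` is the ordinal `M ∩ ω₁`, i.e. `δ(M)`. -/
def DeltaIs (ω1 : ZFSet.{0}) (M : Set ZFSet.{0}) (δ : ZFSet.{0}) : Prop :=
  IsOrd δ ∧ ∀ z : ZFSet.{0}, z ∈ δ ↔ (z ∈ ω1.toSet ∧ z ∈ M)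

/-! ### H_θ, cardinality, regularity -/

/-- `y` lies in the transitive closure of `x`. -/
def InTC (y x : ZFSet.{0}) : Prop :=
  ∃ n : ℕ, ∃ c : Fin (n + 1) → ZFSet.{0}, c 0 ∈ x ∧
    (∀ i : Fin n, c i.succ ∈ c i.castSucc) ∧ c (Fin.last n) = y

/-- `x` has cardinality (strictly) less than the ordinal `θ`. -/
def CardLt (x θ : ZFSet.{0}) : Prop :=
  ∃ β ∈ θ.toSet, ∃ f : x.toSet → β.toSet, Function.Injective f

/-- `x` has cardinality at most that of `κ`. -/
def CardLe (x κ : ZFSet.{0}) : Prop := ∃ f : x.toSet → κ.toSet, Function.Injective f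

/-- The class `H_θ` of sets hereditarily of cardinality `< θ`. -/
def HClass (θ : ZFSet.{0}) : Set ZFSet.{0} :=
  {x | CardLt x θ ∧ ∀ y, InTC y x → CardLt y θ}

/-- `θ` is a regular uncountable cardinal. -/
def IsRegular (θ : ZFSet.{0}) : Prop :=
  IsOrd θ ∧ ZFSet.omega ∈ θ ∧ ¬ θ.toSet.Countable ∧
    ∀ β ∈ θ.toSet, ∀ f : ZFSet.{0} → ZFSet.{0}, (∀ x ∈ β.toSet, f x ∈ θ) →
      ∃ γ ∈ θ.toSet, ∀ x ∈ β.toSet, f x ∈ γ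

/-- `x ≪ θ` : the double powerset of `x` belongs to `H_θ`. -/
def Gg (x θ : ZFSet.{0}) : Prop := ZFSet.powerset (ZFSet.powerset x) ∈ HClass θ

/-! ### ZFC⁻ and ZFC• -/

/-- `r` is a wellordering of `a`, with "every nonempty subset" relativized to `H`. -/
def IsWellOrderOn (H : Set ZFSet.{0}) (r a : ZFSet.{0}) : Prop :=
  (∀ z ∈ r, ∃ x y, x ∈ a ∧ y ∈ a ∧ z = ZFSet.pair x y) ∧
  (∀ x ∈ a.toSet, ∀ y ∈ a.toSet, x ≠ y →
    (ZFSet.pair x y ∈ r ↔ ZFSet.pair y x ∉ r)) ∧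
  (∀ x y z : ZFSet.{0}, ZFSet.pair x y ∈ r → ZFSet.pair y z ∈ r → ZFSet.pair x z ∈ r) ∧
  (∀ b : ZFSet.{0}, b ∈ H → b ⊆ a → (∃ x, x ∈ b) →
    ∃ x, x ∈ b ∧ ∀ y, y ∈ b → y ≠ x → ZFSet.pair x y ∈ r)

/-- `H` is a model of ZFC⁻ (= ZF minus powerset, with collection and wellordering),
stated semantically for a class `H`. -/
def ModelsZFCminus (H : Set ZFSet.{0}) : Prop :=
  (∅ : ZFSet.{0}) ∈ H ∧
  ZFSet.omega ∈ H ∧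
  (∀ a ∈ H, ∀ b ∈ H, ZFSet.pair a b ∈ H) ∧
  (∀ a ∈ H, ZFSet.sUnion a ∈ H) ∧
  -- separation scheme
  (∀ (n : ℕ) (φ : Fml (n + 1)) (v : Fin n → ZFSet.{0}), (∀ i, v i ∈ H) → ∀ a ∈ H,
    ∃ b ∈ H, ∀ x : ZFSet.{0}, x ∈ b ↔ (x ∈ a ∧ Sat H φ (Fin.snoc v x))) ∧
  -- collection scheme
  (∀ (n : ℕ) (φ : Fml (n + 2)) (v : Fin n → ZFSet.{0}), (∀ i, v i ∈ H) → ∀ a ∈ H,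
    (∀ x ∈ a.toSet, ∃ y ∈ H, Sat H φ (Fin.snoc (Fin.snoc v x) y)) →
    ∃ b ∈ H, ∀ x ∈ a.toSet, ∃ y, y ∈ b ∧ Sat H φ (Fin.snoc (Fin.snoc v x) y)) ∧
  -- wellordering axiom
  (∀ a ∈ H, ∃ r, r ∈ H ∧ IsWellOrderOn H r a)

/-! ### Clubs, stationarity, antichains, selfgenericity, precipitousness -/

/-- `C ⊆ ω₁` is club in `ω₁`. -/
def IsClub (ω1 C : ZFSet.{0}) : Prop :=
  C ⊆ ω1 ∧ (∀ α ∈ ω1.toSet, ∃ β, β ∈ C ∧ α ∈ β) ∧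
    ∀ δ ∈ ω1.toSet, (∃ β, β ∈ δ) →
      (∀ α ∈ δ.toSet, ∃ β, β ∈ C ∧ α ∈ β ∧ β ∈ δ) → δ ∈ C

/-- `S` is a stationary subset of `ω₁`, where only clubs belonging to the class `H`
are considered (`H = Set.univ` gives genuine stationarity). -/
def StatIn (H : Set ZFSet.{0}) (ω1 S : ZFSet.{0}) : Prop :=
  S ⊆ ω1 ∧ ∀ C : ZFSet.{0}, C ∈ H → IsClub ω1 C → ∃ x, x ∈ S ∧ x ∈ C

/-- Genuine stationarity in `ω₁`. -/
abbrev Stat (ω1 S : ZFSet.{0}) : Prop := StatIn Set.univ ω1 S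

/-- `A` is a maximal antichain in `NS_{ω₁}⁺` (relative to the class `H`). -/
def MaxAC (H : Set ZFSet.{0}) (ω1 A : ZFSet.{0}) : Prop :=
  (∀ S ∈ A.toSet, StatIn H ω1 S) ∧
  (∀ S ∈ A.toSet, ∀ T ∈ A.toSet, S ≠ T → ¬ StatIn H ω1 (S ∩ T)) ∧
  (∀ S : ZFSet.{0}, S ∈ H → StatIn H ω1 S → ∃ T ∈ A.toSet, StatIn H ω1 (S ∩ T))

/-- A countable `M` is selfgeneric (relative to the ambient class `H`). -/
def SelfGenericIn (H : Set ZFSet.{0}) (ω1 : ZFSet.{0}) (M : Set ZFSet.{0}) : Prop :=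
  ∀ A : ZFSet.{0}, A ∈ M → MaxAC H ω1 A →
    ∃ S, S ∈ A ∧ S ∈ M ∧ ∃ δ, DeltaIs ω1 M δ ∧ δ ∈ S

/-- `W` is a maximal antichain of stationary subsets of `S` (relative to `H`). -/
def MaxACBelow (H : Set ZFSet.{0}) (ω1 S W : ZFSet.{0}) : Prop :=
  (∀ T ∈ W.toSet, T ⊆ S ∧ StatIn H ω1 T) ∧
  (∀ T ∈ W.toSet, ∀ T' ∈ W.toSet, T ≠ T' → ¬ StatIn H ω1 (T ∩ T')) ∧
  (∀ T : ZFSet.{0}, T ∈ H → T ⊆ S → StatIn H ω1 T → ∃ T' ∈ W.toSet, StatIn H ω1 (T ∩ T'))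

/-- Jech's combinatorial characterization of precipitousness of `NS_{ω₁}`,
relativized to the class `H`. -/
def PrecipitousIn (H : Set ZFSet.{0}) (ω1 : ZFSet.{0}) : Prop :=
  ∀ S : ZFSet.{0}, S ∈ H → StatIn H ω1 S →
    ∀ W : ℕ → ZFSet.{0}, (∀ n, W n ∈ H) → (∀ n, MaxACBelow H ω1 S (W n)) →
      (∀ n, ∀ T ∈ (W (n + 1)).toSet, ∃ T' ∈ (W n).toSet, T ⊆ T') →
      ∃ T : ℕ → ZFSet.{0}, (∀ n, T n ∈ (W n).toSet) ∧ (∀ n, T (n + 1) ⊆ T n) ∧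
        ∃ x, ∀ n, x ∈ T n

/-- ZFC• : ZFC⁻ + the double powerset of ω₁ exists + NS_{ω₁} is precipitous,
for a class `H`. -/
def PowIn (H : Set ZFSet.{0}) (a p : ZFSet.{0}) : Prop := p ∈ H ∧ ∀ x, x ∈ p ↔ (x ∈ H ∧ x ⊆ a)

/-- The ordinal `δ` is `ω₁` as computed inside the class `H`. -/
def IsOmega1Of (H : Set ZFSet.{0}) (δ : ZFSet.{0}) : Prop :=
  δ ∈ H ∧ IsOrd δ ∧
  (∀ β ∈ δ.toSet, ∃ f, f ∈ H ∧ IsFun f ∧ (∀ x, domMem f x ↔ x ∈ ZFSet.omega) ∧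
    ∀ y ∈ β.toSet, ∃ n, ZFSet.pair n y ∈ f) ∧
  ¬ ∃ f, f ∈ H ∧ IsFun f ∧ (∀ x, domMem f x ↔ x ∈ ZFSet.omega) ∧
    ∀ y ∈ δ.toSet, ∃ n, ZFSet.pair n y ∈ f

def ModelsZFCbullet (H : Set ZFSet.{0}) : Prop :=
  ModelsZFCminus H ∧ ∃ δ, IsOmega1Of H δ ∧
    (∃ p q, PowIn H δ p ∧ PowIn H p q) ∧ PrecipitousIn H δ

/-! ### Stationarity in `[H_θ]^ω` and projective stationarity -/

def ClosedUnder (M : Set ZFSet.{0}) (F : List ZFSet.{0} → ZFSet.{0}) : Prop :=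
  ∀ l : List ZFSet.{0}, (∀ x ∈ l, x ∈ M) → F l ∈ M

/-- `X` is a stationary family of countable subsets of the class `A`. -/
def StatPow (A : Set ZFSet.{0}) (X : Set (Set ZFSet.{0})) : Prop :=
  ∀ F : List ZFSet.{0} → ZFSet.{0}, (∀ l, F l ∈ A) →
    ∃ M ∈ X, M.Countable ∧ M ⊆ A ∧ ClosedUnder M F

/-- `X` contains a club of countable subsets of the class `A`. -/
def ClubPow (A : Set ZFSet.{0}) (X : Set (Set ZFSet.{0})) : Prop :=
  ∃ F : List ZFSet.{0} → ZFSet.{0}, (∀ l, F l ∈ A) ∧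
    ∀ M : Set ZFSet.{0}, M.Countable → M ⊆ A → ClosedUnder M F → M ∈ X

/-- `X` is a projective stationary family of countable subsets of `A`. -/
def ProjStatPow (ω1 : ZFSet.{0}) (A : Set ZFSet.{0}) (X : Set (Set ZFSet.{0})) : Prop :=
  ∀ S : ZFSet.{0}, Stat ω1 S →
    StatPow A {M | M ∈ X ∧ ∃ δ, DeltaIs ω1 M δ ∧ δ ∈ S}

/-! ### Forcing notions (as ZF-sets) -/

/-- `p ≤ q` in the order coded by the set of pairs `le`. -/
def pLe (le p q : ZFSet.{0}) : Prop := ZFSet.pair p q ∈ le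

def IsForcing (P le : ZFSet.{0}) : Prop :=
  (∀ z ∈ le, ∃ p q, p ∈ P ∧ q ∈ P ∧ z = ZFSet.pair p q) ∧
  (∀ p ∈ P.toSet, pLe le p p) ∧
  (∀ p q r : ZFSet.{0}, pLe le p q → pLe le q r → pLe le p r)

/-- Compatibility of conditions. -/
def CompatC (P le p q : ZFSet.{0}) : Prop := ∃ r, r ∈ P ∧ pLe le r p ∧ pLe le r q

/-- `A` is a maximal antichain in the forcing `(P, le)`. -/
def PMaxAC (P le A : ZFSet.{0}) : Prop :=
  A ⊆ P ∧ (∀ p ∈ A.toSet, ∀ q ∈ A.toSet, p ≠ q → ¬ CompatC P le p q) ∧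
    ∀ p ∈ P.toSet, ∃ q ∈ A.toSet, CompatC P le p q

/-- `p'` is an `(M,ℙ)`-semigeneric condition. -/
def Semigeneric (ω1 P le : ZFSet.{0}) (M : Set ZFSet.{0}) (p' : ZFSet.{0}) : Prop :=
  ∀ q, q ∈ P → pLe le q p' → ∀ A : ZFSet.{0}, A ∈ M → PMaxAC P le A →
    ∃ r, r ∈ A ∧ CompatC P le r q ∧ ParallelO ω1 r M

/-- `p'` is a strongly `(M,ℙ)`-semigeneric condition. -/
def StronglySemigeneric (ω1 P le : ZFSet.{0}) (M : Set ZFSet.{0}) (p' : ZFSet.{0}) : Prop :=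
  ∀ q, q ∈ P → pLe le q p' → ∃ t, t ∈ P ∧ ParallelO ω1 t M ∧
    ∀ r, r ∈ Hull M t → r ∈ P → pLe le r t → CompatC P le r q

/-- `ℙ` is semiproper with respect to `M`. -/
def SemiproperWrt (ω1 P le : ZFSet.{0}) (M : Set ZFSet.{0}) : Prop :=
  ∀ p, p ∈ P → p ∈ M → ∃ p', p' ∈ P ∧ pLe le p' p ∧ Semigeneric ω1 P le M p'

/-- `ℙ` is strongly semiproper with respect to `M`. -/
def StronglySemiproperWrt (ω1 P le : ZFSet.{0}) (M : Set ZFSet.{0}) : Prop :=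
  ∀ p, p ∈ P → p ∈ M → ∃ p', p' ∈ P ∧ pLe le p' p ∧ StronglySemigeneric ω1 P le M p'

/-- `p'` is a strongly `(M,ℙ)`-generic condition (Mitchell). -/
def StronglyGeneric (P le : ZFSet.{0}) (M : Set ZFSet.{0}) (p' : ZFSet.{0}) : Prop :=
  ∀ q, q ∈ P → pLe le q p' → ∃ t, t ∈ P ∧ t ∈ M ∧
    ∀ r, r ∈ M → r ∈ P → pLe le r t → CompatC P le r q

def StronglyProperWrt (P le : ZFSet.{0}) (M : Set ZFSet.{0}) : Prop :=
  ∀ p, p ∈ P → p ∈ M → ∃ p', p' ∈ P ∧ pLe le p' p ∧ StronglyGeneric P le M p'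

/-- `ℙ` is strongly proper. -/
def StronglyProper (P le : ZFSet.{0}) : Prop :=
  ∀ θ : ZFSet.{0}, IsRegular θ → Gg (ZFSet.pair P le) θ →
    ClubPow (HClass θ)
      {M | M.Countable ∧ ElemSub M (HClass θ) ∧ StronglyProperWrt P le M}

/-- `ℙ` is strongly ssp. -/
def StronglySSP (ω1 P le : ZFSet.{0}) : Prop :=
  ∀ θ : ZFSet.{0}, IsRegular θ → Gg (ZFSet.pair P le) θ →
    ProjStatPow ω1 (HClass θ)
      {M | M.Countable ∧ ElemSub M (HClass θ) ∧ StronglySemiproperWrt ω1 P le M}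

/-! ### The games -/

/-- Rules of a game in which the moves of P2 grow a model via `Hull`. -/
structure GameRules : Type 2 where
  legal1 : Set ZFSet.{0} → ZFSet.{0} → Prop
  legal2 : Set ZFSet.{0} → ZFSet.{0} → ZFSet.{0} → Prop

/-- The models built from P2's moves `b`. -/
def Mods (M0 : Set ZFSet.{0}) (b : ℕ → ZFSet.{0}) : ℕ → Set ZFSet
  | 0 => M0
  | n + 1 => Hull (Mods M0 b n) (b n)

/-- A strategy for P2: sees the past rounds and P1's current move. -/
abbrev Strat2 : Type 1 := List (ZFSet.{0} × ZFSet.{0}) → ZFSet.{0} → ZFSet.{0}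

/-- A strategy for P1: sees the past rounds. -/
abbrev Strat1 : Type 1 := List (ZFSet.{0} × ZFSet.{0}) → ZFSet.{0}

def hist2 (σ : Strat2) (a : ℕ → ZFSet.{0}) : ℕ → List (ZFSet × ZFSet.{0})
  | 0 => []
  | n + 1 => hist2 σ a n ++ [(a n, σ (hist2 σ a n) (a n))]

/-- P2's responses when following `σ` against the P1-moves `a`. -/
def resp (σ : Strat2) (a : ℕ → ZFSet.{0}) (n : ℕ) : ZFSet.{0} := σ (hist2 σ a n) (a n)

/-- `σ` is a winning strategy for P2 (the Constructor): as long as P1 has played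
legally, P2's answers are legal. -/
def P2Wins (G : GameRules) (M0 : Set ZFSet.{0}) (σ : Strat2) : Prop :=
  ∀ a : ℕ → ZFSet.{0}, ∀ n : ℕ,
    (∀ k, k ≤ n → G.legal1 (Mods M0 (resp σ a) k) (a k)) →
    G.legal2 (Mods M0 (resp σ a) n) (a n) (resp σ a n)

def hist1 (τ : Strat1) (b : ℕ → ZFSet.{0}) : ℕ → List (ZFSet × ZFSet.{0})
  | 0 => []
  | n + 1 => hist1 τ b n ++ [(τ (hist1 τ b n), b n)]

def move1 (τ : Strat1) (b : ℕ → ZFSet.{0}) (n : ℕ) : ZFSet.{0} := τ (hist1 τ b n)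

/-- `τ` is a winning strategy for P1 (the Challenger): P1 always moves legally
(as long as P2 has), and eventually P2's answer is illegal. -/
def P1Wins (G : GameRules) (M0 : Set ZFSet.{0}) (τ : Strat1) : Prop :=
  ∀ b : ℕ → ZFSet.{0},
    (∀ n, (∀ k, k < n → G.legal2 (Mods M0 b k) (move1 τ b k) (b k)) →
      G.legal1 (Mods M0 b n) (move1 τ b n)) ∧
    ∃ n, (∀ k, k < n → G.legal2 (Mods M0 b k) (move1 τ b k) (b k)) ∧
      ¬ G.legal2 (Mods M0 b n) (move1 τ b n) (b n)

/-- The antichain catching game `G^cat_M` (antichains relative to the class `H`). -/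
def catRules (H : Set ZFSet.{0}) (ω1 : ZFSet.{0}) : GameRules where
  legal1 M A := A ∈ M ∧ MaxAC H ω1 A
  legal2 M A S := S ∈ A ∧ (∃ δ, DeltaIs ω1 M δ ∧ δ ∈ S) ∧ ParallelO ω1 S M

/-- The capturing game `G^cap_M(X)`. -/
def capRules (ω1 : ZFSet.{0}) (X : Set ZFSet.{0}) : GameRules where
  legal1 _ x := x ∈ X
  legal2 M x f := IsFun f ∧ (∀ y, domMem f y ↔ y ∈ ω1) ∧
    (∀ a b, ZFSet.pair a b ∈ f → b ∈ X) ∧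
    (∃ δ, DeltaIs ω1 M δ ∧ ZFSet.pair δ x ∈ f) ∧ ParallelO ω1 f M

/-- The catching-capturing game `G^{c-c}_M(X)`; P1's moves are tagged pairs. -/
def ccRules (H : Set ZFSet.{0}) (ω1 : ZFSet.{0}) (X : Set ZFSet.{0}) : GameRules where
  legal1 M m := (∃ A, m = ZFSet.pair ∅ A ∧ (catRules H ω1).legal1 M A) ∨
    (∃ x, m = ZFSet.pair {∅} x ∧ x ∈ X)
  legal2 M m r := (∃ A, m = ZFSet.pair ∅ A ∧ (catRules H ω1).legal2 M A r) ∨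
    (∃ x, m = ZFSet.pair {∅} x ∧ (capRules ω1 X).legal2 M x r)

end CcPaper
namespace CcPaper

/-! ### Auxiliary development for Statement 11 -/

section Aux

open ZFSet Classical

theorem ZFSet.mem_toSet (a b : ZFSet.{0}) : a ∈ b.toSet ↔ a ∈ b := Iff.rfl

theorem ZFSet.toSet_subset_iff {x y : ZFSet.{0}} : x.toSet ⊆ y.toSet ↔ x ⊆ y :=
  ZFSet.coe_subset_coe

theorem ZFSet.toSet_empty : (∅ : ZFSet.{0}).toSet = ∅ := ZFSet.coe_empty

theorem ZFSet.toSet_insert (x y : ZFSet.{0}) : (insert x y).toSet = insert x y.toSet :=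
  ZFSet.coe_insert x y

theorem ZFSet.mem_diff {x y z : ZFSet.{0}} : z ∈ x \ y ↔ z ∈ x ∧ z ∉ y := ZFSet.mem_sdiff

lemma isOrd_of_mem {a b : ZFSet.{0}} (hb : IsOrd b) (h : a ∈ b) : IsOrd a :=
  ⟨hb.2 a h, fun y hy => hb.2 y (hb.1.mem_trans hy h)⟩

/-- Trichotomy for von Neumann ordinals. -/
lemma ord_tri : ∀ a : ZFSet.{0}, IsOrd a → ∀ b : ZFSet.{0}, IsOrd b →
    a ∈ b ∨ a = b ∨ b ∈ a := by
  intro a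
  induction a using ZFSet.inductionOn with
  | _ a iha =>
    intro ha b
    induction b using ZFSet.inductionOn with
    | _ b ihb =>
      intro hb
      by_cases hab : a ∈ b
      · exact Or.inl hab
      by_cases hba : b ∈ a
      · exact Or.inr (Or.inr hba)
      refine Or.inr (Or.inl (ZFSet.ext fun z => ⟨fun hz => ?_, fun hz => ?_⟩))
      · rcases iha z hz (isOrd_of_mem ha hz) b hb with h | h | h
        · exact h
        · exact absurd (by rw [← h]; exact hz) hba
        · exact absurd (ha.1.mem_trans h hz) hba
      · rcases ihb z hz (isOrd_of_mem hb hz) with h | h | h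
        · exact absurd (hb.1.mem_trans h hz) hab
        · exact absurd (by rw [h]; exact hz) hab
        · exact h

lemma mem_omega1_of_countable {ω1 : ZFSet.{0}} (hω1 : IsOmega1 ω1) {a : ZFSet.{0}}
    (ha : IsOrd a) (hc : a.toSet.Countable) : a ∈ ω1 := by
  rcases ord_tri a ha ω1 hω1.1 with h | h | h
  · exact h
  · exact absurd (h ▸ hc) hω1.2.1
  · have hsub : ω1.toSet ⊆ a.toSet := ZFSet.toSet_subset_iff.2 (ha.1 ω1 h)
    exact absurd (hc.mono hsub) hω1.2.1

lemma isOrd_empty : IsOrd (∅ : ZFSet.{0}) :=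
  ⟨ZFSet.isTransitive_empty, fun y hy => absurd hy (ZFSet.notMem_empty y)⟩

lemma empty_mem_omega1 {ω1 : ZFSet.{0}} (hω1 : IsOmega1 ω1) : (∅ : ZFSet.{0}) ∈ ω1 :=
  mem_omega1_of_countable hω1 isOrd_empty (by rw [ZFSet.toSet_empty]; exact Set.countable_empty)

lemma succ_mem_omega1 {ω1 : ZFSet.{0}} (hω1 : IsOmega1 ω1) {α : ZFSet.{0}} (h : α ∈ ω1) :
    insert α α ∈ ω1 := by
  have hαo : IsOrd α := isOrd_of_mem hω1.1 h
  apply mem_omega1_of_countable hω1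
  · constructor
    · intro y hy
      rcases ZFSet.mem_insert_iff.1 hy with rfl | hy'
      · exact fun z hz => ZFSet.mem_insert_of_mem _ hz
      · exact fun z hz => ZFSet.mem_insert_of_mem _ (hαo.1 y hy' hz)
    · intro y hy
      rcases ZFSet.mem_insert_iff.1 hy with rfl | hy'
      · exact hαo.1
      · exact (isOrd_of_mem hαo hy').1
  · rw [ZFSet.toSet_insert]
    exact (hω1.2.2 α ((ZFSet.mem_toSet _ _).2 h)).insert α

lemma isClub_omega1 {ω1 : ZFSet.{0}} (hω1 : IsOmega1 ω1) : IsClub ω1 ω1 :=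
  ⟨ZFSet.subset_def.2 fun _ hz => hz,
   fun α hα => ⟨insert α α, succ_mem_omega1 hω1 ((ZFSet.mem_toSet _ _).1 hα),
     ZFSet.mem_insert α α⟩,
   fun δ hδ _ _ => (ZFSet.mem_toSet _ _).1 hδ⟩

lemma stat_mono {ω1 X Y : ZFSet.{0}} (hX : StatIn Set.univ ω1 X)
    (hXY : ∀ z, z ∈ X → z ∈ Y) (hY : Y ⊆ ω1) : StatIn Set.univ ω1 Y :=
  ⟨hY, fun C hC hC' => by
    obtain ⟨x, hx1, hx2⟩ := hX.2 C hC hC'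
    exact ⟨x, hXY x hx1, hx2⟩⟩

lemma not_stat {ω1 X : ZFSet.{0}} (hsub : X ⊆ ω1) (h : ¬ StatIn Set.univ ω1 X) :
    ∃ C, IsClub ω1 C ∧ ∀ x, x ∈ X → x ∉ C := by
  have h2 : ¬ ∀ C : ZFSet.{0}, C ∈ (Set.univ : Set ZFSet.{0}) → IsClub ω1 C →
      ∃ x, x ∈ X ∧ x ∈ C := fun hb => h ⟨hsub, hb⟩
  push_neg at h2
  obtain ⟨C, _, hC, hd⟩ := h2
  exact ⟨C, hC, fun x hx hxC => (hd x hx) hxC⟩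

/-! #### Skolem functions -/

/-- Skolem function: an element of `b` containing `a`, inside `ω1`. -/
def ubSk (ω1 a b : ZFSet.{0}) : ZFSet.{0} :=
  if h : ∃ β : ZFSet.{0}, β ∈ ω1 ∧ β ∈ b ∧ a ∈ β then h.choose else ∅

lemma ubSk_spec {ω1 a b : ZFSet.{0}} (h : ∃ β : ZFSet.{0}, β ∈ ω1 ∧ β ∈ b ∧ a ∈ β) :
    ubSk ω1 a b ∈ ω1 ∧ ubSk ω1 a b ∈ b ∧ a ∈ ubSk ω1 a b := by
  rw [ubSk, dif_pos h]; exact h.choose_spec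

/-- Skolem function: a club avoiding `a ∩ b`. -/
def clubSk (ω1 a b : ZFSet.{0}) : ZFSet.{0} :=
  if h : ∃ C : ZFSet.{0}, IsClub ω1 C ∧ ∀ x, ¬ (x ∈ a ∧ x ∈ b ∧ x ∈ C) then h.choose else ∅

lemma clubSk_spec {ω1 a b : ZFSet.{0}}
    (h : ∃ C : ZFSet.{0}, IsClub ω1 C ∧ ∀ x, ¬ (x ∈ a ∧ x ∈ b ∧ x ∈ C)) :
    IsClub ω1 (clubSk ω1 a b) ∧ ∀ x, ¬ (x ∈ a ∧ x ∈ b ∧ x ∈ clubSk ω1 a b) := by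
  rw [clubSk, dif_pos h]; exact h.choose_spec

/-- Skolem function: a member of `b` that is a subset of `ω1` and includes `a`. -/
def refSk (ω1 a b : ZFSet.{0}) : ZFSet.{0} :=
  if h : ∃ T : ZFSet.{0}, T ∈ b ∧ T ⊆ ω1 ∧ a ⊆ T then h.choose else ∅

lemma refSk_spec {ω1 a b : ZFSet.{0}} (h : ∃ T : ZFSet.{0}, T ∈ b ∧ T ⊆ ω1 ∧ a ⊆ T) :
    refSk ω1 a b ∈ b ∧ refSk ω1 a b ⊆ ω1 ∧ a ⊆ refSk ω1 a b := by
  rw [refSk, dif_pos h]; exact h.choose_spec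

/-- The combined closure function fed to projective stationarity. -/
def skolemF (ω1 : ZFSet.{0}) (c : ℕ → ZFSet.{0}) : List ZFSet.{0} → ZFSet.{0}
  | [] => ∅
  | [_] => ω1
  | [a, b] => ubSk ω1 a b
  | [a, b, _] => clubSk ω1 a b
  | [a, b, _, _] => refSk ω1 a b
  | _ :: _ :: _ :: _ :: _ :: rest => c rest.length

@[simp] lemma skolemF_nil {ω1 c} : skolemF ω1 c [] = ∅ := rfl
@[simp] lemma skolemF_one {ω1 c a} : skolemF ω1 c [a] = ω1 := rfl
@[simp] lemma skolemF_two {ω1 c a b} : skolemF ω1 c [a, b] = ubSk ω1 a b := rfl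
@[simp] lemma skolemF_three {ω1 c a b d} : skolemF ω1 c [a, b, d] = clubSk ω1 a b := rfl
@[simp] lemma skolemF_four {ω1 c a b d e} : skolemF ω1 c [a, b, d, e] = refSk ω1 a b := rfl
@[simp] lemma skolemF_big {ω1 c a b d e f rest} :
    skolemF ω1 c (a :: b :: d :: e :: f :: rest) = c rest.length := rfl

/-! #### `HClass` facts -/

lemma inTC_of_mem {y x : ZFSet.{0}} (h : y ∈ x) : InTC y x :=
  ⟨0, fun _ => y, h, fun i => i.elim0, rfl⟩

lemma inTC_step {z y x : ZFSet.{0}} (hzy : InTC z y) (hyx : y ∈ x) : InTC z x := by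
  obtain ⟨n, c, hc0, hstep, hlast⟩ := hzy
  refine ⟨n + 1, Fin.cons y c, by rw [Fin.cons_zero]; exact hyx, ?_, ?_⟩
  · intro i
    induction i using Fin.cases with
    | zero =>
      rw [Fin.castSucc_zero, Fin.cons_succ, Fin.cons_zero]
      exact hc0
    | succ j =>
      rw [Fin.cons_succ, ← Fin.succ_castSucc, Fin.cons_succ]
      exact hstep j
  · rw [← Fin.succ_last, Fin.cons_succ]
    exact hlast

lemma hclass_mem_trans {θ x y : ZFSet.{0}} (hx : x ∈ HClass θ) (h : y ∈ x) :
    y ∈ HClass θ :=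
  ⟨hx.2 y (inTC_of_mem h), fun z hz => hx.2 z (inTC_step hz h)⟩

lemma subset_omega1_mem_hclass {ω1 θ : ZFSet.{0}} (hbig : Gg ω1 θ) {X : ZFSet.{0}}
    (hX : X ⊆ ω1) : X ∈ HClass θ := by
  have h1 : ZFSet.powerset ω1 ∈ HClass θ :=
    hclass_mem_trans hbig (ZFSet.mem_powerset.2 (ZFSet.subset_def.2 fun _ hz => hz))
  exact hclass_mem_trans h1 (ZFSet.mem_powerset.2 hX)

lemma family_mem_hclass {ω1 θ : ZFSet.{0}} (hbig : Gg ω1 θ) {Y : ZFSet.{0}}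
    (hY : ∀ T, T ∈ Y → T ⊆ ω1) : Y ∈ HClass θ :=
  hclass_mem_trans hbig (ZFSet.mem_powerset.2 (ZFSet.subset_def.2
    fun T hT => ZFSet.mem_powerset.2 (hY T hT)))

lemma omega1_mem_hclass {ω1 θ : ZFSet.{0}} (hbig : Gg ω1 θ) : ω1 ∈ HClass θ :=
  subset_omega1_mem_hclass hbig (ZFSet.subset_def.2 fun _ hz => hz)

lemma skolemF_mem_hclass {ω1 θ : ZFSet.{0}} (hbig : Gg ω1 θ) (c : ℕ → ZFSet.{0})
    (hc : ∀ k, ∀ T, T ∈ c k → T ⊆ ω1) : ∀ l, skolemF ω1 c l ∈ HClass θ := by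
  have hemp : (∅ : ZFSet.{0}) ∈ HClass θ :=
    subset_omega1_mem_hclass hbig (ZFSet.empty_subset ω1)
  intro l
  match l with
  | [] => exact hemp
  | [_] => exact omega1_mem_hclass hbig
  | [a, b] =>
    rw [skolemF_two, ubSk]
    split
    · next h => exact hclass_mem_trans (omega1_mem_hclass hbig) h.choose_spec.1
    · exact hemp
  | [a, b, _] =>
    rw [skolemF_three, clubSk]
    split
    · next h => exact subset_omega1_mem_hclass hbig h.choose_spec.1.1
    · exact hemp
  | [a, b, _, _] =>
    rw [skolemF_four, refSk]
    split
    · next h => exact subset_omega1_mem_hclass hbig h.choose_spec.2.1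
    · exact hemp
  | a :: b :: d :: e :: f :: rest =>
    rw [skolemF_big]
    exact family_mem_hclass hbig (hc rest.length)

/-! #### Suprema of countable sequences of countable ordinals -/

lemma mem_sup_iff {g : ℕ → ZFSet.{0}} {x : ZFSet.{0}} :
    x ∈ ZFSet.sUnion (ZFSet.range g) ↔ ∃ n, x ∈ g n := by
  rw [ZFSet.mem_sUnion]
  constructor
  · rintro ⟨z, hz, hxz⟩
    obtain ⟨n, rfl⟩ := ZFSet.mem_range.1 hz
    exact ⟨n, hxz⟩
  · rintro ⟨n, hn⟩
    exact ⟨g n, ZFSet.mem_range.2 ⟨n, rfl⟩, hn⟩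

lemma sup_mem_omega1 {ω1 : ZFSet.{0}} (hω1 : IsOmega1 ω1) {g : ℕ → ZFSet.{0}}
    (hg : ∀ n, g n ∈ ω1) : ZFSet.sUnion (ZFSet.range g) ∈ ω1 := by
  apply mem_omega1_of_countable hω1
  · constructor
    · intro y hy
      obtain ⟨n, hn⟩ := mem_sup_iff.1 hy
      exact ZFSet.subset_def.2 fun z hz =>
        mem_sup_iff.2 ⟨n, (isOrd_of_mem hω1.1 (hg n)).1 y hn hz⟩
    · intro y hy
      obtain ⟨n, hn⟩ := mem_sup_iff.1 hy
      exact (isOrd_of_mem (isOrd_of_mem hω1.1 (hg n)) hn).1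
  · have : (ZFSet.sUnion (ZFSet.range g) : ZFSet.{0}).toSet = ⋃ n, (g n).toSet := by
      ext x
      simp only [ZFSet.mem_toSet, Set.mem_iUnion, mem_sup_iff]
    rw [this]
    exact Set.countable_iUnion fun n => hω1.2.2 (g n) ((ZFSet.mem_toSet _ _).2 (hg n))

/-! #### Intersection of clubs -/

lemma isClub_inter {ω1 C D : ZFSet.{0}} (hω1 : IsOmega1 ω1) (hC : IsClub ω1 C)
    (hD : IsClub ω1 D) : IsClub ω1 (C ∩ D) := by
  have hnext : ∀ E : ZFSet.{0}, IsClub ω1 E → ∀ x, x ∈ ω1 →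
      ubSk ω1 x E ∈ ω1 ∧ ubSk ω1 x E ∈ E ∧ x ∈ ubSk ω1 x E := by
    intro E hE x hx
    obtain ⟨β, hβE, hxβ⟩ := hE.2.1 x ((ZFSet.mem_toSet _ _).2 hx)
    exact ubSk_spec ⟨β, ZFSet.subset_def.1 hE.1 hβE, hβE, hxβ⟩
  refine ⟨ZFSet.subset_def.2 fun z hz => ZFSet.subset_def.1 hC.1 (ZFSet.mem_inter.1 hz).1,
    ?_, ?_⟩
  · intro α hα
    have hαm : α ∈ ω1 := (ZFSet.mem_toSet _ _).1 hα
    -- build an alternating sequence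
    let g : ℕ → ZFSet.{0} := fun n =>
      Nat.rec α (fun k x => if k % 2 = 0 then ubSk ω1 x C else ubSk ω1 x D) n
    have hgstep : ∀ k, g (k + 1) = if k % 2 = 0 then ubSk ω1 (g k) C else ubSk ω1 (g k) D :=
      fun k => rfl
    have hmem : ∀ n, g n ∈ ω1 := by
      intro n
      induction n with
      | zero => exact hαm
      | succ k ih =>
        rw [hgstep k]
        by_cases hk : k % 2 = 0
        · rw [if_pos hk]; exact (hnext C hC (g k) ih).1
        · rw [if_neg hk]; exact (hnext D hD (g k) ih).1
    have hgrow : ∀ k, g k ∈ g (k + 1) := by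
      intro k
      rw [hgstep k]
      by_cases hk : k % 2 = 0
      · rw [if_pos hk]; exact (hnext C hC (g k) (hmem k)).2.2
      · rw [if_neg hk]; exact (hnext D hD (g k) (hmem k)).2.2
    have hinC : ∀ k, k % 2 = 0 → g (k + 1) ∈ C := by
      intro k hk; rw [hgstep k, if_pos hk]; exact (hnext C hC (g k) (hmem k)).2.1
    have hinD : ∀ k, ¬ k % 2 = 0 → g (k + 1) ∈ D := by
      intro k hk; rw [hgstep k, if_neg hk]; exact (hnext D hD (g k) (hmem k)).2.1
    set δ' : ZFSet.{0} := ZFSet.sUnion (ZFSet.range g) with hδ'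
    have hδ'ω : δ' ∈ ω1 := sup_mem_omega1 hω1 hmem
    have hsub' : ∀ n, g n ∈ δ' := fun n => mem_sup_iff.2 ⟨n + 1, hgrow n⟩
    have hup : ∀ x m k, x ∈ g m → m ≤ k → x ∈ g k := by
      intro x m k hx hk
      induction k, hk using Nat.le_induction with
      | base => exact hx
      | succ k _ ih =>
        exact ZFSet.subset_def.1 ((isOrd_of_mem hω1.1 (hmem (k + 1))).1 (g k) (hgrow k)) ih
    have hwit : ∀ E : ZFSet.{0}, IsClub ω1 E → (∀ m, ∃ j, g (j + 1) ∈ E ∧ m ≤ j + 1) →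
        δ' ∈ E := by
      intro E hE hj
      apply hE.2.2 δ' ((ZFSet.mem_toSet _ _).2 hδ'ω) ⟨g 0, hsub' 0⟩
      intro x hx
      obtain ⟨m, hm⟩ := mem_sup_iff.1 ((ZFSet.mem_toSet _ _).1 hx)
      obtain ⟨j, hjE, hjm⟩ := hj m
      exact ⟨g (j + 1), hjE, hup x m (j + 1) hm hjm, hsub' (j + 1)⟩
    have hδ'C : δ' ∈ C := by
      apply hwit C hC
      intro m
      exact ⟨2 * m, hinC (2 * m) (by omega), by omega⟩
    have hδ'D : δ' ∈ D := by
      apply hwit D hD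
      intro m
      exact ⟨2 * m + 1, hinD (2 * m + 1) (by omega), by omega⟩
    exact ⟨δ', ZFSet.mem_inter.2 ⟨hδ'C, hδ'D⟩, hsub' 0⟩
  · intro d hd hne hwit
    refine ZFSet.mem_inter.2 ⟨hC.2.2 d hd hne ?_, hD.2.2 d hd hne ?_⟩ <;>
    · intro x hx
      obtain ⟨β, hβ, h1, h2⟩ := hwit x hx
      rcases ZFSet.mem_inter.1 hβ with ⟨hβC, hβD⟩
      first
        | exact ⟨β, hβC, h1, h2⟩
        | exact ⟨β, hβD, h1, h2⟩

/-! #### Maximal antichains from antichains below `S` -/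

lemma maxAC_mk_pos {ω1 S Wn : ZFSet.{0}} (hω1 : IsOmega1 ω1)
    (hS : StatIn Set.univ ω1 S) (hWn : MaxACBelow Set.univ ω1 S Wn)
    (hcompl : StatIn Set.univ ω1 (ω1 \ S)) :
    MaxAC Set.univ ω1 (Wn ∪ {ω1 \ S}) := by
  have hmemW : ∀ T : ZFSet.{0}, T ∈ Wn → T ⊆ S ∧ StatIn Set.univ ω1 T :=
    fun T hT => hWn.1 T ((ZFSet.mem_toSet _ _).2 hT)
  have hdisj : ∀ T : ZFSet.{0}, T ∈ Wn → ¬ StatIn Set.univ ω1 (T ∩ (ω1 \ S)) := by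
    intro T hT hstat
    obtain ⟨x, hx1, _⟩ := hstat.2 ω1 (Set.mem_univ _) (isClub_omega1 hω1)
    rcases ZFSet.mem_inter.1 hx1 with ⟨hxT, hxc⟩
    exact (ZFSet.mem_diff.1 hxc).2 (ZFSet.subset_def.1 (hmemW T hT).1 hxT)
  have hdisj' : ∀ T : ZFSet.{0}, T ∈ Wn → ¬ StatIn Set.univ ω1 ((ω1 \ S) ∩ T) := by
    intro T hT hstat
    obtain ⟨x, hx1, _⟩ := hstat.2 ω1 (Set.mem_univ _) (isClub_omega1 hω1)
    rcases ZFSet.mem_inter.1 hx1 with ⟨hxc, hxT⟩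
    exact (ZFSet.mem_diff.1 hxc).2 (ZFSet.subset_def.1 (hmemW T hT).1 hxT)
  refine ⟨?_, ?_, ?_⟩
  · intro T hT
    rcases ZFSet.mem_union.1 ((ZFSet.mem_toSet _ _).1 hT) with hT' | hT'
    · exact (hmemW T hT').2
    · rw [ZFSet.mem_singleton.1 hT']; exact hcompl
  · intro T hT T' hT' hne
    rcases ZFSet.mem_union.1 ((ZFSet.mem_toSet _ _).1 hT) with h1 | h1 <;>
      rcases ZFSet.mem_union.1 ((ZFSet.mem_toSet _ _).1 hT') with h2 | h2
    · exact hWn.2.1 T ((ZFSet.mem_toSet _ _).2 h1) T' ((ZFSet.mem_toSet _ _).2 h2) hne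
    · rw [ZFSet.mem_singleton.1 h2]; exact hdisj T h1
    · rw [ZFSet.mem_singleton.1 h1]; exact hdisj' T' h2
    · exact absurd ((ZFSet.mem_singleton.1 h1).trans (ZFSet.mem_singleton.1 h2).symm) hne
  · intro X _ hX
    by_cases h1 : StatIn Set.univ ω1 (X ∩ S)
    · obtain ⟨T', hT'W, hstatT⟩ := hWn.2.2 (X ∩ S) (Set.mem_univ _)
        (ZFSet.subset_def.2 fun z hz => (ZFSet.mem_inter.1 hz).2) h1
      refine ⟨T', (ZFSet.mem_toSet _ _).2
        (ZFSet.mem_union.2 (Or.inl ((ZFSet.mem_toSet _ _).1 hT'W))), ?_⟩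
      refine stat_mono hstatT (fun z hz => ?_) (ZFSet.subset_def.2 fun z hz =>
        ZFSet.subset_def.1 hX.1 (ZFSet.mem_inter.1 hz).1)
      rcases ZFSet.mem_inter.1 hz with ⟨hz1, hz2⟩
      exact ZFSet.mem_inter.2 ⟨(ZFSet.mem_inter.1 hz1).1, hz2⟩
    · refine ⟨ω1 \ S, (ZFSet.mem_toSet _ _).2
        (ZFSet.mem_union.2 (Or.inr (ZFSet.mem_singleton.2 rfl))), ?_⟩
      obtain ⟨C1, hC1, hC1d⟩ := not_stat
        (ZFSet.subset_def.2 fun z hz =>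
          ZFSet.subset_def.1 hX.1 (ZFSet.mem_inter.1 hz).1) h1
      refine ⟨ZFSet.subset_def.2 fun z hz =>
        ZFSet.subset_def.1 hX.1 (ZFSet.mem_inter.1 hz).1, ?_⟩
      intro C _ hC
      obtain ⟨x, hxX, hxC⟩ := hX.2 (C ∩ C1) (Set.mem_univ _) (isClub_inter hω1 hC hC1)
      have hxω := ZFSet.subset_def.1 hX.1 hxX
      have hxS : x ∉ S := fun hxS =>
        hC1d x (ZFSet.mem_inter.2 ⟨hxX, hxS⟩) (ZFSet.mem_inter.1 hxC).2
      exact ⟨x, ZFSet.mem_inter.2 ⟨hxX, ZFSet.mem_diff.2 ⟨hxω, hxS⟩⟩,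
        (ZFSet.mem_inter.1 hxC).1⟩

lemma maxAC_mk_neg {ω1 S Wn : ZFSet.{0}} (hω1 : IsOmega1 ω1)
    (hS : StatIn Set.univ ω1 S) (hWn : MaxACBelow Set.univ ω1 S Wn)
    (hcompl : ¬ StatIn Set.univ ω1 (ω1 \ S)) :
    MaxAC Set.univ ω1 Wn := by
  obtain ⟨C1, hC1, hC1d⟩ := not_stat
    (ZFSet.subset_def.2 fun z hz => (ZFSet.mem_diff.1 hz).1) hcompl
  refine ⟨fun T hT => (hWn.1 T hT).2, hWn.2.1, ?_⟩
  intro X _ hX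
  have h1 : StatIn Set.univ ω1 (X ∩ S) := by
    refine ⟨ZFSet.subset_def.2 fun z hz =>
      ZFSet.subset_def.1 hX.1 (ZFSet.mem_inter.1 hz).1, ?_⟩
    intro C _ hC
    obtain ⟨x, hxX, hxC⟩ := hX.2 (C ∩ C1) (Set.mem_univ _) (isClub_inter hω1 hC hC1)
    have hxω := ZFSet.subset_def.1 hX.1 hxX
    have hxS : x ∈ S := by
      by_contra hxS
      exact hC1d x (ZFSet.mem_diff.2 ⟨hxω, hxS⟩) (ZFSet.mem_inter.1 hxC).2
    exact ⟨x, ZFSet.mem_inter.2 ⟨hxX, hxS⟩, (ZFSet.mem_inter.1 hxC).1⟩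
  obtain ⟨T', hT'W, hstatT⟩ := hWn.2.2 (X ∩ S) (Set.mem_univ _)
    (ZFSet.subset_def.2 fun z hz => (ZFSet.mem_inter.1 hz).2) h1
  refine ⟨T', hT'W, ?_⟩
  refine stat_mono hstatT (fun z hz => ?_) (ZFSet.subset_def.2 fun z hz =>
    ZFSet.subset_def.1 hX.1 (ZFSet.mem_inter.1 hz).1)
  rcases ZFSet.mem_inter.1 hz with ⟨hz1, hz2⟩
  exact ZFSet.mem_inter.2 ⟨(ZFSet.mem_inter.1 hz1).1, hz2⟩

end Aux

/-- projective stationary many countable selfgeneric `M ≺ H_θ` imply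
that `NS_{ω₁}` is precipitous. -/
theorem precipitous_of_projStat_selfgeneric
    (ω1 θ : ZFSet.{0}) (hω1 : IsOmega1 ω1) (hθ : IsRegular θ) (hbig : Gg ω1 θ)
    (h : ProjStatPow ω1 (HClass θ)
      {M | M.Countable ∧ ElemSub M (HClass θ) ∧ SelfGenericIn Set.univ ω1 M}) :
    PrecipitousIn Set.univ ω1 := by
  classical
  intro S _ hS W _ hW hRef
  -- Build genuine maximal antichains from the antichains below `S`.
  obtain ⟨A, hA, hAmem⟩ : ∃ A : ℕ → ZFSet.{0}, (∀ n, MaxAC Set.univ ω1 (A n)) ∧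
      ∀ n T, T ∈ A n → (T ∈ W n ∨ T = ω1 \ S) := by
    by_cases hcompl : StatIn Set.univ ω1 (ω1 \ S)
    · exact ⟨fun n => W n ∪ {ω1 \ S},
        fun n => maxAC_mk_pos hω1 hS (hW n) hcompl,
        fun n T hT => (ZFSet.mem_union.1 hT).imp id ZFSet.mem_singleton.1⟩
    · exact ⟨W, fun n => maxAC_mk_neg hω1 hS (hW n) hcompl, fun n T hT => Or.inl hT⟩
  have hWsub : ∀ n T, T ∈ W n → T ⊆ ω1 := by
    intro n T hT
    have h1 := ((hW n).1 T ((ZFSet.mem_toSet _ _).2 hT)).1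
    exact ZFSet.subset_def.2 fun z hz =>
      ZFSet.subset_def.1 hS.1 (ZFSet.subset_def.1 h1 hz)
  set c : ℕ → ZFSet.{0} := fun k => if k % 2 = 0 then W (k / 2) else A (k / 2) with hcdef
  have hcsub : ∀ k, ∀ T, T ∈ c k → T ⊆ ω1 := by
    intro k T hT
    have hck : c k = if k % 2 = 0 then W (k / 2) else A (k / 2) := rfl
    rw [hck] at hT
    by_cases hk : k % 2 = 0
    · rw [if_pos hk] at hT; exact hWsub _ T hT
    · rw [if_neg hk] at hT
      rcases hAmem _ T hT with h1 | rfl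
      · exact hWsub _ T h1
      · exact ZFSet.subset_def.2 fun z hz => (ZFSet.mem_diff.1 hz).1
  obtain ⟨M, hMset, hMc, hMsub, hMcl⟩ :=
    h S hS (skolemF ω1 c) (skolemF_mem_hclass hbig c hcsub)
  simp only [Set.mem_setOf_eq] at hMset
  obtain ⟨⟨_, _, hSG⟩, δ, hδ, hδS⟩ := hMset
  -- membership facts for `M`
  have hEmpM : (∅ : ZFSet.{0}) ∈ M := by
    have hl : ∀ x ∈ ([] : List ZFSet.{0}), x ∈ M := by
      intro x hx
      exact absurd hx (List.not_mem_nil (a := x))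
    have := hMcl [] hl
    rwa [skolemF_nil] at this
  have hω1M : ω1 ∈ M := by
    have hl : ∀ x ∈ [(∅ : ZFSet.{0})], x ∈ M := by
      intro x hx
      simp only [List.mem_cons, List.not_mem_nil, or_false] at hx
      rw [hx]; exact hEmpM
    have := hMcl [∅] hl
    rwa [skolemF_one] at this
  have hubM : ∀ a b : ZFSet.{0}, a ∈ M → b ∈ M → ubSk ω1 a b ∈ M := by
    intro a b ha hb
    have hl : ∀ x ∈ [a, b], x ∈ M := by
      intro x hx
      simp only [List.mem_cons, List.not_mem_nil, or_false] at hx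
      rcases hx with rfl | rfl
      exacts [ha, hb]
    have := hMcl [a, b] hl
    rwa [skolemF_two] at this
  have hclubM : ∀ a b : ZFSet.{0}, a ∈ M → b ∈ M → clubSk ω1 a b ∈ M := by
    intro a b ha hb
    have hl : ∀ x ∈ [a, b, (∅ : ZFSet.{0})], x ∈ M := by
      intro x hx
      simp only [List.mem_cons, List.not_mem_nil, or_false] at hx
      rcases hx with rfl | rfl | rfl
      exacts [ha, hb, hEmpM]
    have := hMcl [a, b, ∅] hl
    rwa [skolemF_three] at this
  have hrefM : ∀ a b : ZFSet.{0}, a ∈ M → b ∈ M → refSk ω1 a b ∈ M := by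
    intro a b ha hb
    have hl : ∀ x ∈ [a, b, (∅ : ZFSet.{0}), (∅ : ZFSet.{0})], x ∈ M := by
      intro x hx
      simp only [List.mem_cons, List.not_mem_nil, or_false] at hx
      rcases hx with rfl | rfl | rfl | rfl
      exacts [ha, hb, hEmpM, hEmpM]
    have := hMcl [a, b, ∅, ∅] hl
    rwa [skolemF_four] at this
  have hcM : ∀ k, c k ∈ M := by
    intro k
    have hmem : ∀ x ∈ (∅ :: ∅ :: ∅ :: ∅ :: ∅ :: List.replicate k (∅ : ZFSet.{0})),
        x ∈ M := by
      intro x hx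
      simp only [List.mem_cons, List.mem_replicate] at hx
      rcases hx with rfl | rfl | rfl | rfl | rfl | ⟨_, rfl⟩ <;> exact hEmpM
    have := hMcl (∅ :: ∅ :: ∅ :: ∅ :: ∅ :: List.replicate k (∅ : ZFSet.{0})) hmem
    rwa [skolemF_big, List.length_replicate] at this
  have hWM : ∀ n, W n ∈ M := by
    intro n
    have h1 : c (2 * n) = W n := by
      have e1 : 2 * n % 2 = 0 := by omega
      have e2 : 2 * n / 2 = n := by omega
      show (if 2 * n % 2 = 0 then W (2 * n / 2) else A (2 * n / 2)) = W n
      rw [if_pos e1, e2]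
    have := hcM (2 * n); rwa [h1] at this
  have hAM : ∀ n, A n ∈ M := by
    intro n
    have h1 : c (2 * n + 1) = A n := by
      have e1 : ¬ (2 * n + 1) % 2 = 0 := by omega
      have e2 : (2 * n + 1) / 2 = n := by omega
      show (if (2 * n + 1) % 2 = 0 then W ((2 * n + 1) / 2) else A ((2 * n + 1) / 2)) = A n
      rw [if_neg e1, e2]
    have := hcM (2 * n + 1); rwa [h1] at this
  -- facts about `δ = M ∩ ω₁`
  have hδmem : ∀ z : ZFSet.{0}, z ∈ δ ↔ z ∈ ω1.toSet ∧ z ∈ M := hδ.2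
  have hδω1 : δ ∈ ω1 := by
    apply mem_omega1_of_countable hω1 hδ.1
    exact hMc.mono fun z hz => ((hδmem z).1 ((ZFSet.mem_toSet _ _).1 hz)).2
  -- `δ` belongs to every club in `M`
  have hδC : ∀ C : ZFSet.{0}, C ∈ M → IsClub ω1 C → δ ∈ C := by
    intro C hCM hC
    apply hC.2.2 δ ((ZFSet.mem_toSet _ _).2 hδω1)
    · exact ⟨∅, (hδmem ∅).2 ⟨(ZFSet.mem_toSet _ _).2 (empty_mem_omega1 hω1), hEmpM⟩⟩
    · intro x hx
      have hxδ := (ZFSet.mem_toSet _ _).1 hx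
      have hxM := ((hδmem x).1 hxδ).2
      have hxω := ((hδmem x).1 hxδ).1
      obtain ⟨β, hβC, hxβ⟩ := hC.2.1 x hxω
      have hspec := ubSk_spec (a := x) (b := C)
        ⟨β, ZFSet.subset_def.1 hC.1 hβC, hβC, hxβ⟩
      exact ⟨ubSk ω1 x C, hspec.2.1, hspec.2.2,
        (hδmem _).2 ⟨(ZFSet.mem_toSet _ _).2 hspec.1, hubM x C hxM hCM⟩⟩
  -- selection of generic elements from each antichain
  have hex : ∀ n, ∃ T : ZFSet.{0}, T ∈ W n ∧ T ∈ M ∧ δ ∈ T := by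
    intro n
    obtain ⟨T, hTA, hTM, δ', hδ', hδ'T⟩ := hSG (A n) (hAM n) (hA n)
    have hδδ' : δ' = δ := ZFSet.ext fun z => (hδ'.2 z).trans ((hδ.2 z).symm)
    rw [hδδ'] at hδ'T
    rcases hAmem n T hTA with h1 | rfl
    · exact ⟨T, h1, hTM, hδ'T⟩
    · exact absurd hδS (ZFSet.mem_diff.1 hδ'T).2
  choose T hTW hTM hTδ using hex
  -- uniqueness: at most one element of `W n ∩ M` contains `δ`
  have huniq : ∀ n (T₁ T₂ : ZFSet.{0}), T₁ ∈ W n → T₂ ∈ W n → T₁ ∈ M → T₂ ∈ M →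
      δ ∈ T₁ → δ ∈ T₂ → T₁ = T₂ := by
    intro n T₁ T₂ h1 h2 hm1 hm2 hd1 hd2
    by_contra hne
    have hns := (hW n).2.1 T₁ ((ZFSet.mem_toSet _ _).2 h1) T₂
      ((ZFSet.mem_toSet _ _).2 h2) hne
    have hsub12 : T₁ ∩ T₂ ⊆ ω1 := ZFSet.subset_def.2 fun z hz =>
      ZFSet.subset_def.1 (hWsub n T₁ h1) (ZFSet.mem_inter.1 hz).1
    obtain ⟨C0, hC0, hC0d⟩ := not_stat hsub12 hns
    have hCspec := clubSk_spec (a := T₁) (b := T₂)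
      ⟨C0, hC0, fun x hx => hC0d x (ZFSet.mem_inter.2 ⟨hx.1, hx.2.1⟩) hx.2.2⟩
    have hCM : clubSk ω1 T₁ T₂ ∈ M := hclubM T₁ T₂ hm1 hm2
    exact hCspec.2 δ ⟨hd1, hd2, hδC _ hCM hCspec.1⟩
  -- coherence of the chosen branch
  have hcoh : ∀ n, T (n + 1) ⊆ T n := by
    intro n
    obtain ⟨T', hT'W, hT'sup⟩ := hRef n (T (n + 1))
      ((ZFSet.mem_toSet _ _).2 (hTW (n + 1)))
    have hR := refSk_spec (a := T (n + 1)) (b := W n)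
      ⟨T', (ZFSet.mem_toSet _ _).1 hT'W,
        hWsub n T' ((ZFSet.mem_toSet _ _).1 hT'W), hT'sup⟩
    have hRM : refSk ω1 (T (n + 1)) (W n) ∈ M := hrefM _ _ (hTM (n + 1)) (hWM n)
    have hδR : δ ∈ refSk ω1 (T (n + 1)) (W n) :=
      ZFSet.subset_def.1 hR.2.2 (hTδ (n + 1))
    have heq := huniq n (refSk ω1 (T (n + 1)) (W n)) (T n) hR.1 (hTW n) hRM
      (hTM n) hδR (hTδ n)
    rw [← heq]
    exact hR.2.2
  exact ⟨T, fun n => (ZFSet.mem_toSet _ _).2 (hTW n), hcoh, δ, hTδ⟩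
end CcPaper
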